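/- For the coadjoint action of the symmetric contravariant tensor fields 𝔗Q on the symmetric covariant tensor fields 𝔗*Q (paired by ⟨A_k, X^k⟩ = ∫_Q X^{i_1…i_k} A_{i_1…i_k} dq), the coadjoint action of X^k ∈ 𝔗^k Q on A_{m+k−1} ∈ 𝔗*_{m+k−1} Q, defined by ⟨ad*_{X^k} A_{m+k−1}, Y^m⟩ = ⟨A_{m+k−1}, [Y^m, X^k]⟩, equals A_{m+k−1} ⋆ X^k + X^k ∗ A_{m+k−1} + div X^k ⌟ A_{m+k−1}, where (A_{m+k−1} ⋆ X^k) = m A_{i_1…i_{m−1} i_{m+1}…i_{m+k}} X^{i_{m+1}…i_{m+k}}_{,i_m} dq^{i_1}⊗…⊗dq^{i_m}, (X^k ∗ A_{m+k−1}) = k X^{i_{m+1}…i_{m+k−1}ℓ} A_{i_1…i_{m+k−1},ℓ} dq^{i_1}⊗…⊗dq^{i_m}, and div X^k = k X^{ℓ i_2…i_k}_{,ℓ} ∂_{q^{i_2}}⊗…⊗∂_{q^{i_k}}. -/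

import Mathlib

open scoped BigOperators

noncomputable section

/-- Points of `Q`, modelled in local coordinates as `ℝⁿ`. -/
abbrev Coord (n : ℕ) : Type := Fin n → ℝ

/-- Partial derivative `∂f/∂q^i`. -/
def pd {n : ℕ} (i : Fin n) (f : Coord n → ℝ) : Coord n → ℝ :=
  fun q => fderiv ℝ f q (Pi.single i 1)

/-- The coefficients `X^{i₁…i_k}(q)` of a `k`-th order contravariant tensor field on `Q`. -/
abbrev TF (n k : ℕ) : Type := Coord n → (Fin k → Fin n) → ℝ

/-- A tensor field is smooth if all its coefficients are smooth. -/
def SmoothT {n k : ℕ} (X : TF n k) : Prop := ∀ I, ContDiff ℝ (⊤ : ℕ∞) (fun q => X q I)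

/-- A tensor field is symmetric if its coefficients are symmetric in all indices. -/
def SymmT {n k : ℕ} (X : TF n k) : Prop :=
  ∀ (q : Coord n) (σ : Equiv.Perm (Fin k)) (I : Fin k → Fin n), X q (I ∘ σ) = X q I

/-- The (raw, local coordinate) symmetric Schouten concomitant of a `K`-th order and an
`M`-th order symmetric contravariant tensor field, written with result order `d`
(intended: `d = K + M - 1`):
`[X,Y] = K X^{i_{M+1}…i_{M+K−1}ℓ} ∂_ℓ Y^{i_1…i_M} − M Y^{i_{K+1}…i_{K+M−1}ℓ} ∂_ℓ X^{i_1…i_K}`. -/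
def schouten {n : ℕ} (K M d : ℕ) (X : TF n K) (Y : TF n M) : TF n d :=
  fun q I =>
    (K : ℝ) * ∑ ℓ : Fin n,
        X q (fun j => if _ : (j : ℕ) < K - 1 then
              (if h2 : (M + (j : ℕ)) < d then I ⟨M + (j : ℕ), h2⟩ else ℓ) else ℓ)
          * pd ℓ (fun q' => Y q' (fun j => if h : (j : ℕ) < d then I ⟨(j : ℕ), h⟩ else ℓ)) q
    - (M : ℝ) * ∑ ℓ : Fin n,
        Y q (fun j => if _ : (j : ℕ) < M - 1 then
              (if h2 : (K + (j : ℕ)) < d then I ⟨K + (j : ℕ), h2⟩ else ℓ) else ℓ)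
          * pd ℓ (fun q' => X q' (fun j => if h : (j : ℕ) < d then I ⟨(j : ℕ), h⟩ else ℓ)) q

/-- Symmetrization of the coefficients of a tensor field. -/
def symmetrize {n N : ℕ} (Z : TF n N) : TF n N :=
  fun q I => ((Nat.factorial N : ℝ))⁻¹ * ∑ σ : Equiv.Perm (Fin N), Z q (I ∘ σ)



open MeasureTheory

/-! ### Auxiliary machinery -/

section CoadjointAux

open MeasureTheory

lemma contDiff_pd {n : ℕ} {f : Coord n → ℝ} (hf : ContDiff ℝ (⊤ : ℕ∞) f) (ℓ : Fin n) :
    ContDiff ℝ (⊤ : ℕ∞) (pd ℓ f) :=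
  (hf.fderiv_right (m := (⊤ : ℕ∞)) (by simp)).clm_apply contDiff_const

lemma hcs_pd {n : ℕ} {f : Coord n → ℝ} (hf : HasCompactSupport f) (ℓ : Fin n) :
    HasCompactSupport (pd ℓ f) :=
  hf.fderiv_apply (𝕜 := ℝ) (Pi.single ℓ 1)

lemma pd_mul {n : ℕ} {a b : Coord n → ℝ} (ha : ContDiff ℝ (⊤ : ℕ∞) a) (hb : ContDiff ℝ (⊤ : ℕ∞) b)
    (ℓ : Fin n) (q : Coord n) :
    pd ℓ (fun q' => a q' * b q') q = pd ℓ a q * b q + a q * pd ℓ b q := by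
  unfold pd
  rw [fderiv_fun_mul (ha.differentiable (by simp) q) (hb.differentiable (by simp) q)]
  simp [mul_comm]
  ring

lemma ibp {n : ℕ} {f g : Coord n → ℝ} (hf : ContDiff ℝ (⊤ : ℕ∞) f) (hg : ContDiff ℝ (⊤ : ℕ∞) g)
    (hfc : HasCompactSupport f) (ℓ : Fin n) :
    ∫ q : Coord n, f q * pd ℓ g q = - ∫ q : Coord n, pd ℓ f q * g q := by
  have h1 : Integrable (fun q : Coord n => pd ℓ f q * g q) :=
    (((contDiff_pd hf ℓ).continuous).mul hg.continuous).integrable_of_hasCompactSupport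
      ((hcs_pd hfc ℓ).mul_right)
  have h2 : Integrable (fun q : Coord n => f q * pd ℓ g q) :=
    ((hf.continuous).mul (contDiff_pd hg ℓ).continuous).integrable_of_hasCompactSupport
      (hfc.mul_right)
  have h3 : Integrable (fun q : Coord n => f q * g q) :=
    ((hf.continuous).mul hg.continuous).integrable_of_hasCompactSupport (hfc.mul_right)
  exact integral_mul_fderiv_eq_neg_fderiv_mul_of_integrable h1 h2 h3
    (fun x _ => hf.differentiable (by simp) x) (fun x _ => hg.differentiable (by simp) x)

/-- Concatenate two index blocks. -/
def glue {n : ℕ} (a b N : ℕ) (hab : a + b = N) (u : Fin a → Fin n) (v : Fin b → Fin n) :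
    Fin N → Fin n :=
  fun t => if h : (t : ℕ) < a then u ⟨t, h⟩ else v ⟨(t : ℕ) - a, by have := t.isLt; omega⟩

def splitEquiv (n a b N : ℕ) (hab : a + b = N) :
    ((Fin a → Fin n) × (Fin b → Fin n)) ≃ (Fin N → Fin n) where
  toFun p := glue a b N hab p.1 p.2
  invFun f := (fun s => f ⟨s, by have := s.isLt; omega⟩,
               fun s => f ⟨a + s, by have := s.isLt; omega⟩)
  left_inv p := by
    refine Prod.ext ?_ ?_ <;> funext s
    · simp [glue]
    · simp only [glue]
      rw [dif_neg (by simp)]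
      congr 1
      ext
      simp
  right_inv f := by
    funext t
    simp only [glue]
    split_ifs with h
    · rfl
    · congr 1
      ext
      have := t.isLt
      simp
      omega

lemma sum_glue {n : ℕ} (a b N : ℕ) (hab : a + b = N) (F : (Fin N → Fin n) → ℝ) :
    ∑ I : Fin N → Fin n, F I
      = ∑ u : Fin a → Fin n, ∑ v : Fin b → Fin n, F (glue a b N hab u v) := by
  calc ∑ I : Fin N → Fin n, F I
      = ∑ p : (Fin a → Fin n) × (Fin b → Fin n), F (glue a b N hab p.1 p.2) :=
        (Fintype.sum_equiv (splitEquiv n a b N hab)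
          (fun p => F (glue a b N hab p.1 p.2)) F (fun p => rfl)).symm
    _ = _ := Fintype.sum_prod_type (f := fun p => F (glue a b N hab p.1 p.2))

lemma sum_fin1 {n : ℕ} (F : (Fin 1 → Fin n) → ℝ) :
    ∑ w : Fin 1 → Fin n, F w = ∑ ℓ : Fin n, F (fun _ => ℓ) :=
  Fintype.sum_equiv (Equiv.funUnique (Fin 1) (Fin n)) _ _
    (fun w => congrArg F (funext fun j => congrArg w (Subsingleton.elim _ _)))

def rotFun (a b N : ℕ) (hab : a + b = N) : Fin N → Fin N :=
  fun t => if h : (t : ℕ) < b then ⟨(t : ℕ) + a, by omega⟩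
    else ⟨(t : ℕ) - b, by have := t.isLt; omega⟩

lemma rotFun_val (a b N : ℕ) (hab : a + b = N) (t : Fin N) :
    ((rotFun a b N hab t : Fin N) : ℕ) = if (t : ℕ) < b then (t : ℕ) + a else (t : ℕ) - b := by
  unfold rotFun
  split_ifs <;> rfl

def rotPerm (a b N : ℕ) (hab : a + b = N) : Equiv.Perm (Fin N) where
  toFun := rotFun a b N hab
  invFun := rotFun b a N (by omega)
  left_inv := fun t => by
    have ht := t.isLt
    ext
    rw [rotFun_val, rotFun_val]
    split_ifs <;> omega
  right_inv := fun t => by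
    have ht := t.isLt
    ext
    rw [rotFun_val, rotFun_val]
    split_ifs <;> omega

/-- Block-swap for symmetric tensors. -/
lemma symm_glue_comm {n N : ℕ} {A : TF n N} (hA : SymmT A) (a b : ℕ) (hab : a + b = N)
    (q : Coord n) (u : Fin a → Fin n) (v : Fin b → Fin n) :
    A q (glue a b N hab u v) = A q (glue b a N (by omega) v u) := by
  have key : (glue a b N hab u v) ∘ (rotPerm a b N hab) = glue b a N (by omega) v u := by
    funext t
    have ht := t.isLt
    show glue a b N hab u v (rotFun a b N hab t) = _
    simp only [glue, rotFun_val]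
    split_ifs <;>
      first
        | rfl
        | simp only [Nat.add_sub_cancel]
        | omega
  rw [← key]
  exact (hA q (rotPerm a b N hab) (glue a b N hab u v)).symm

end CoadjointAux



/-- `A_{m+k−1} ⋆ X^k = m A_{i₁…i_{m−1} i_{m+1}…i_{m+k}} X^{i_{m+1}…i_{m+k}}_{,i_m}`,
a covariant tensor field of order `m`. -/

def starOp {n : ℕ} (hn : 0 < n) (m k : ℕ) (A : TF n (m + k - 1)) (X : TF n k) :
    TF n m :=
  fun q I => (m : ℝ) * ∑ J : Fin k → Fin n,
    A q (fun t => if h : (t : ℕ) < m - 1 then I ⟨(t : ℕ), by omega⟩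
          else if h2 : (t : ℕ) - (m - 1) < k then J ⟨(t : ℕ) - (m - 1), h2⟩
          else ⟨0, hn⟩)
      * pd (if h : 0 < m then I ⟨m - 1, Nat.sub_lt h Nat.one_pos⟩ else ⟨0, hn⟩)
          (fun q' => X q' J) q

/-- `X^k ∗ A_{m+k−1} = k X^{i_{m+1}…i_{m+k−1}ℓ} A_{i₁…i_{m+k−1},ℓ}`,
a covariant tensor field of order `m`. -/
def astOp {n : ℕ} (hn : 0 < n) (m k : ℕ) (X : TF n k) (A : TF n (m + k - 1)) :
    TF n m :=
  fun q I => (k : ℝ) * ∑ ℓ : Fin n, ∑ J : Fin (k - 1) → Fin n,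
    X q (fun t => if h : (t : ℕ) < k - 1 then J ⟨(t : ℕ), h⟩ else ℓ)
      * pd ℓ (fun q' => A q'
          (fun t => if h : (t : ℕ) < m then I ⟨(t : ℕ), h⟩
            else if h2 : (t : ℕ) - m < k - 1 then J ⟨(t : ℕ) - m, h2⟩
            else ⟨0, hn⟩)) q

/-- The divergence `div X^k = k X^{ℓ i₂…i_k}_{,ℓ}`, a contravariant tensor
field of order `k − 1`. -/
def divOp {n : ℕ} (k : ℕ) (X : TF n k) : TF n (k - 1) :=
  fun q J => (k : ℝ) * ∑ ℓ : Fin n,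
    pd ℓ (fun q' => X q'
      (fun t => if h : 0 < (t : ℕ)
        then J ⟨(t : ℕ) - 1, by have := t.isLt; omega⟩ else ℓ)) q

/-- The contraction `D ⌟ A` of the `k − 1` contravariant indices of `D` with
the covariant tensor field `A` of order `m + k − 1`, of order `m`. -/
def contrOp {n : ℕ} (hn : 0 < n) (m k : ℕ) (D : TF n (k - 1))
    (A : TF n (m + k - 1)) : TF n m :=
  fun q I => ∑ J : Fin (k - 1) → Fin n,
    D q J * A q (fun t => if h : (t : ℕ) < k - 1 then J ⟨(t : ℕ), h⟩
        else if h2 : (t : ℕ) - (k - 1) < m then I ⟨(t : ℕ) - (k - 1), h2⟩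
        else ⟨0, hn⟩)


section MainLemmas

open MeasureTheory

lemma star_eq {n : ℕ} (hn : 0 < n) (m k : ℕ) (A : TF n (m + k - 1)) (hAsym : SymmT A)
    (X : TF n k) (Y : TF n m) (q : Coord n) :
    ∑ I : Fin m → Fin n, starOp hn m k A X q I * Y q I
      = ∑ I : Fin (m + k - 1) → Fin n, A q I *
          ((m : ℝ) * ∑ ℓ : Fin n,
            Y q (fun j => if _ : (j : ℕ) < m - 1 then
                  (if h2 : (k + (j : ℕ)) < m + k - 1 then I ⟨k + (j : ℕ), h2⟩ else ℓ) else ℓ)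
              * pd ℓ (fun q' => X q' (fun j => if h : (j : ℕ) < m + k - 1 then I ⟨(j : ℕ), h⟩ else ℓ)) q) := by
  rcases Nat.eq_zero_or_pos m with hm | hm
  · subst hm
    simp [starOp]
  · have e1 : (m - 1) + k = m + k - 1 := by omega
    have e2 : (m - 1) + 1 = m := by omega
    have e3 : k + (m - 1) = m + k - 1 := by omega
    have hstar : ∀ (u : Fin (m - 1) → Fin n) (ℓ : Fin n),
        starOp hn m k A X q (glue (m - 1) 1 m e2 u (fun _ => ℓ))
          = (m : ℝ) * ∑ J : Fin k → Fin n,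
              A q (glue (m - 1) k (m + k - 1) e1 u J) * pd ℓ (fun q' => X q' J) q := by
      intro u ℓ
      simp only [starOp]
      congr 1
      refine Finset.sum_congr rfl fun J _ => ?_
      congr 1
      · congr 1
        funext t
        have ht := t.isLt
        simp only [glue]
        split_ifs <;> first | rfl | omega
      · congr 1
        rw [dif_pos hm]
        simp only [glue]
        rw [dif_neg (by simp)]
    have hY' : ∀ (J : Fin k → Fin n) (u : Fin (m - 1) → Fin n) (ℓ : Fin n),
        (fun j : Fin m => if _ : (j : ℕ) < m - 1 then
            (if h2 : (k + (j : ℕ)) < m + k - 1 then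
              (glue k (m - 1) (m + k - 1) e3 J u) ⟨k + (j : ℕ), h2⟩ else ℓ) else ℓ)
          = glue (m - 1) 1 m e2 u (fun _ => ℓ) := by
      intro J u ℓ
      funext j
      have hj := j.isLt
      simp only [glue]
      split_ifs <;> first | rfl | omega | (exact congrArg u (by ext; simp; try omega))
    have hX' : ∀ (J : Fin k → Fin n) (u : Fin (m - 1) → Fin n) (ℓ : Fin n),
        (fun j : Fin k => if h : (j : ℕ) < m + k - 1 then
            (glue k (m - 1) (m + k - 1) e3 J u) ⟨(j : ℕ), h⟩ else ℓ) = J := by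
      intro J u ℓ
      funext j
      have hj := j.isLt
      rw [dif_pos (by omega)]
      simp only [glue]
      rw [dif_pos (by simpa using hj)]
    calc ∑ I : Fin m → Fin n, starOp hn m k A X q I * Y q I
        = ∑ u : Fin (m - 1) → Fin n, ∑ ℓ : Fin n, ∑ J : Fin k → Fin n,
            (m : ℝ) * (A q (glue (m - 1) k (m + k - 1) e1 u J) *
              (pd ℓ (fun q' => X q' J) q * Y q (glue (m - 1) 1 m e2 u (fun _ => ℓ)))) := by
          rw [sum_glue (m - 1) 1 m e2 (fun I => starOp hn m k A X q I * Y q I)]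
          refine Finset.sum_congr rfl fun u _ => ?_
          rw [sum_fin1 (fun w => starOp hn m k A X q (glue (m - 1) 1 m e2 u w)
            * Y q (glue (m - 1) 1 m e2 u w))]
          refine Finset.sum_congr rfl fun ℓ _ => ?_
          rw [hstar u ℓ, Finset.mul_sum, Finset.sum_mul]
          exact Finset.sum_congr rfl fun J _ => by ring
      _ = ∑ I : Fin (m + k - 1) → Fin n, A q I *
            ((m : ℝ) * ∑ ℓ : Fin n,
              Y q (fun j => if _ : (j : ℕ) < m - 1 then
                    (if h2 : (k + (j : ℕ)) < m + k - 1 then I ⟨k + (j : ℕ), h2⟩ else ℓ) else ℓ)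
                * pd ℓ (fun q' => X q' (fun j => if h : (j : ℕ) < m + k - 1 then I ⟨(j : ℕ), h⟩ else ℓ)) q) := by
          rw [sum_glue k (m - 1) (m + k - 1) e3
            (fun I => A q I * ((m : ℝ) * ∑ ℓ : Fin n,
              Y q (fun j => if _ : (j : ℕ) < m - 1 then
                    (if h2 : (k + (j : ℕ)) < m + k - 1 then I ⟨k + (j : ℕ), h2⟩ else ℓ) else ℓ)
                * pd ℓ (fun q' => X q' (fun j => if h : (j : ℕ) < m + k - 1 then I ⟨(j : ℕ), h⟩ else ℓ)) q))]
          conv_rhs => rw [Finset.sum_comm]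
          refine Finset.sum_congr rfl fun u _ => ?_
          rw [Finset.sum_comm]
          refine Finset.sum_congr rfl fun J _ => ?_
          rw [show A q (glue k (m - 1) (m + k - 1) e3 J u)
              = A q (glue (m - 1) k (m + k - 1) e1 u J) from
            symm_glue_comm hAsym k (m - 1) e3 q J u]
          simp only [hY', hX']
          rw [Finset.mul_sum, Finset.mul_sum]
          exact Finset.sum_congr rfl fun ℓ _ => by ring

lemma astcontr_pt {n : ℕ} (hn : 0 < n) (m k : ℕ) (hk : 0 < k)
    (e4 : m + (k - 1) = m + k - 1) (e5 : (k - 1) + 1 = k)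
    (X : TF n k) (hXsm : SmoothT X) (hXsym : SymmT X)
    (A : TF n (m + k - 1)) (hAsm : SmoothT A) (hAsym : SymmT A)
    (Y : TF n m) (q : Coord n) :
    ∑ I : Fin m → Fin n,
        (astOp hn m k X A q I + contrOp hn m k (divOp k X) A q I) * Y q I
      = ∑ u : Fin m → Fin n, ∑ v : Fin (k - 1) → Fin n, ∑ ℓ : Fin n,
          (k : ℝ) * (pd ℓ (fun q' => A q' (glue m (k - 1) (m + k - 1) e4 u v)
              * X q' (glue (k - 1) 1 k e5 v (fun _ => ℓ))) q * Y q u) := by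
  have e6 : (k - 1) + m = m + k - 1 := by omega
  have e7 : 1 + (k - 1) = k := by omega
  have hXb : ∀ (v : Fin (k - 1) → Fin n) (ℓ : Fin n),
      (fun t : Fin k => if h : (t : ℕ) < k - 1 then v ⟨(t : ℕ), h⟩ else ℓ)
        = glue (k - 1) 1 k e5 v (fun _ => ℓ) := by
    intro v ℓ
    funext t
    have ht := t.isLt
    simp only [glue]
  have hAb : ∀ (u : Fin m → Fin n) (v : Fin (k - 1) → Fin n),
      (fun t : Fin (m + k - 1) => if h : (t : ℕ) < m then u ⟨(t : ℕ), h⟩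
          else if h2 : (t : ℕ) - m < k - 1 then v ⟨(t : ℕ) - m, h2⟩ else ⟨0, hn⟩)
        = glue m (k - 1) (m + k - 1) e4 u v := by
    intro u v
    funext t
    have ht := t.isLt
    simp only [glue]
    split_ifs <;> first | rfl | omega
  have hAc2 : ∀ (u : Fin m → Fin n) (v : Fin (k - 1) → Fin n),
      (fun t : Fin (m + k - 1) => if h : (t : ℕ) < k - 1 then v ⟨(t : ℕ), h⟩
          else if h2 : (t : ℕ) - (k - 1) < m then u ⟨(t : ℕ) - (k - 1), h2⟩ else ⟨0, hn⟩)
        = glue (k - 1) m (m + k - 1) e6 v u := by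
    intro u v
    funext t
    have ht := t.isLt
    simp only [glue]
    split_ifs <;> first | rfl | omega
  have hXd : ∀ (v : Fin (k - 1) → Fin n) (ℓ : Fin n),
      (fun t : Fin k => if h : 0 < (t : ℕ)
          then v ⟨(t : ℕ) - 1, by have := t.isLt; omega⟩ else ℓ)
        = glue 1 (k - 1) k e7 (fun _ => ℓ) v := by
    intro v ℓ
    funext t
    have ht := t.isLt
    simp only [glue]
    split_ifs <;> first | rfl | omega
  have hAswap : ∀ (u : Fin m → Fin n) (v : Fin (k - 1) → Fin n) (q : Coord n),
      A q (glue (k - 1) m (m + k - 1) e6 v u) = A q (glue m (k - 1) (m + k - 1) e4 u v) :=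
    fun u v q => symm_glue_comm hAsym (k - 1) m e6 q v u
  have hpdX : ∀ (v : Fin (k - 1) → Fin n) (ℓ : Fin n),
      (fun q' => X q' (glue 1 (k - 1) k e7 (fun _ => ℓ) v))
        = (fun q' => X q' (glue (k - 1) 1 k e5 v (fun _ => ℓ))) :=
    fun v ℓ => funext fun q' => symm_glue_comm hXsym 1 (k - 1) e7 q' (fun _ => ℓ) v
  have hprod : ∀ (u : Fin m → Fin n) (v : Fin (k - 1) → Fin n) (ℓ : Fin n) (q : Coord n),
      pd ℓ (fun q' => A q' (glue m (k - 1) (m + k - 1) e4 u v)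
          * X q' (glue (k - 1) 1 k e5 v (fun _ => ℓ))) q
        = pd ℓ (fun q' => A q' (glue m (k - 1) (m + k - 1) e4 u v)) q
            * X q (glue (k - 1) 1 k e5 v (fun _ => ℓ))
          + A q (glue m (k - 1) (m + k - 1) e4 u v)
            * pd ℓ (fun q' => X q' (glue (k - 1) 1 k e5 v (fun _ => ℓ))) q :=
    fun u v ℓ q => pd_mul (hAsm _) (hXsm _) ℓ q
  refine Finset.sum_congr rfl fun u _ => ?_
  simp only [astOp, contrOp, divOp, hXb, hAb, hAc2, hXd, hAswap, hpdX]
  simp only [hprod, mul_add, add_mul, Finset.sum_add_distrib, Finset.mul_sum,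
    Finset.sum_mul]
  congr 1
  · rw [Finset.sum_comm]
    exact Finset.sum_congr rfl fun v _ => Finset.sum_congr rfl fun ℓ _ => by ring
  · exact Finset.sum_congr rfl fun v _ => Finset.sum_congr rfl fun ℓ _ => by ring


lemma astcontr_eq {n : ℕ} (hn : 0 < n) (m k : ℕ)
    (X : TF n k) (hXsm : SmoothT X) (hXsym : SymmT X)
    (A : TF n (m + k - 1)) (hAsm : SmoothT A) (hAsym : SymmT A)
    (hAc : ∀ I, HasCompactSupport (fun q => A q I))
    (Y : TF n m) (hYsm : SmoothT Y) :
    ∫ q : Coord n, ∑ I : Fin m → Fin n,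
        (astOp hn m k X A q I + contrOp hn m k (divOp k X) A q I) * Y q I
      = - ∫ q : Coord n, ∑ I : Fin (m + k - 1) → Fin n,
          A q I * ((k : ℝ) * ∑ ℓ : Fin n,
            X q (fun j => if _ : (j : ℕ) < k - 1 then
                  (if h2 : (m + (j : ℕ)) < m + k - 1 then I ⟨m + (j : ℕ), h2⟩ else ℓ) else ℓ)
              * pd ℓ (fun q' => Y q' (fun j => if h : (j : ℕ) < m + k - 1 then I ⟨(j : ℕ), h⟩ else ℓ)) q) := by
  rcases Nat.eq_zero_or_pos k with hk | hk
  · subst hk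
    simp [astOp, contrOp, divOp]
  · have e4 : m + (k - 1) = m + k - 1 := by omega
    have e5 : (k - 1) + 1 = k := by omega
    have e6 : (k - 1) + m = m + k - 1 := by omega
    have e7 : 1 + (k - 1) = k := by omega
    have hL := astcontr_pt hn m k hk e4 e5 X hXsm hXsym A hAsm hAsym Y
    have hXa : ∀ (u : Fin m → Fin n) (v : Fin (k - 1) → Fin n) (ℓ : Fin n),
        (fun j : Fin k => if _ : (j : ℕ) < k - 1 then
            (if h2 : (m + (j : ℕ)) < m + k - 1 then
              (glue m (k - 1) (m + k - 1) e4 u v) ⟨m + (j : ℕ), h2⟩ else ℓ) else ℓ)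
          = glue (k - 1) 1 k e5 v (fun _ => ℓ) := by
      intro u v ℓ
      funext j
      have hj := j.isLt
      simp only [glue]
      split_ifs <;> first | rfl | omega | (exact congrArg v (by ext; simp; try omega))
    have hYa : ∀ (u : Fin m → Fin n) (v : Fin (k - 1) → Fin n) (ℓ : Fin n),
        (fun j : Fin m => if h : (j : ℕ) < m + k - 1 then
            (glue m (k - 1) (m + k - 1) e4 u v) ⟨(j : ℕ), h⟩ else ℓ) = u := by
      intro u v ℓ
      funext j
      have hj := j.isLt
      rw [dif_pos (by omega)]
      simp only [glue]
      rw [dif_pos (by simpa using hj)]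
    -- pointwise form of the right-hand side integrand
    have hR : ∀ q : Coord n, ∑ I : Fin (m + k - 1) → Fin n,
        A q I * ((k : ℝ) * ∑ ℓ : Fin n,
          X q (fun j => if _ : (j : ℕ) < k - 1 then
                (if h2 : (m + (j : ℕ)) < m + k - 1 then I ⟨m + (j : ℕ), h2⟩ else ℓ) else ℓ)
            * pd ℓ (fun q' => Y q' (fun j => if h : (j : ℕ) < m + k - 1 then I ⟨(j : ℕ), h⟩ else ℓ)) q)
        = ∑ u : Fin m → Fin n, ∑ v : Fin (k - 1) → Fin n, ∑ ℓ : Fin n,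
            (k : ℝ) * ((A q (glue m (k - 1) (m + k - 1) e4 u v)
              * X q (glue (k - 1) 1 k e5 v (fun _ => ℓ)))
                * pd ℓ (fun q' => Y q' u) q) := by
      intro q
      rw [sum_glue m (k - 1) (m + k - 1) e4
        (fun I => A q I * ((k : ℝ) * ∑ ℓ : Fin n,
          X q (fun j => if _ : (j : ℕ) < k - 1 then
                (if h2 : (m + (j : ℕ)) < m + k - 1 then I ⟨m + (j : ℕ), h2⟩ else ℓ) else ℓ)
            * pd ℓ (fun q' => Y q' (fun j => if h : (j : ℕ) < m + k - 1 then I ⟨(j : ℕ), h⟩ else ℓ)) q))]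
      refine Finset.sum_congr rfl fun u _ => Finset.sum_congr rfl fun v _ => ?_
      simp only [hXa, hYa]
      rw [Finset.mul_sum, Finset.mul_sum]
      exact Finset.sum_congr rfl fun ℓ _ => by ring
    -- integrability
    have int1 : ∀ (u : Fin m → Fin n) (v : Fin (k - 1) → Fin n) (ℓ : Fin n),
        Integrable (fun q => (k : ℝ) * (pd ℓ (fun q' => A q' (glue m (k - 1) (m + k - 1) e4 u v)
            * X q' (glue (k - 1) 1 k e5 v (fun _ => ℓ))) q * Y q u)) := by
      intro u v ℓ
      refine Continuous.integrable_of_hasCompactSupport ?_ ?_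
      · exact continuous_const.mul (((contDiff_pd ((hAsm _).mul (hXsm _)) ℓ).continuous).mul
          (hYsm u).continuous)
      · exact (((hcs_pd ((hAc _).mul_right) ℓ)).mul_right).mul_left
    have int2 : ∀ (u : Fin m → Fin n) (v : Fin (k - 1) → Fin n) (ℓ : Fin n),
        Integrable (fun q => (k : ℝ) * ((A q (glue m (k - 1) (m + k - 1) e4 u v)
            * X q (glue (k - 1) 1 k e5 v (fun _ => ℓ))) * pd ℓ (fun q' => Y q' u) q)) := by
      intro u v ℓ
      refine Continuous.integrable_of_hasCompactSupport ?_ ?_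
      · exact continuous_const.mul (((hAsm _).continuous.mul (hXsm _).continuous).mul
          (contDiff_pd (hYsm u) ℓ).continuous)
      · exact (((hAc _).mul_right).mul_right).mul_left
    calc ∫ q : Coord n, ∑ I : Fin m → Fin n,
          (astOp hn m k X A q I + contrOp hn m k (divOp k X) A q I) * Y q I
        = ∫ q : Coord n, ∑ u : Fin m → Fin n, ∑ v : Fin (k - 1) → Fin n, ∑ ℓ : Fin n,
            (k : ℝ) * (pd ℓ (fun q' => A q' (glue m (k - 1) (m + k - 1) e4 u v)
                * X q' (glue (k - 1) 1 k e5 v (fun _ => ℓ))) q * Y q u) :=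
          integral_congr_ae (Filter.Eventually.of_forall hL)
      _ = ∑ u : Fin m → Fin n, ∑ v : Fin (k - 1) → Fin n, ∑ ℓ : Fin n,
            ∫ q : Coord n, (k : ℝ) * (pd ℓ (fun q' => A q' (glue m (k - 1) (m + k - 1) e4 u v)
                * X q' (glue (k - 1) 1 k e5 v (fun _ => ℓ))) q * Y q u) := by
          rw [integral_finset_sum _ (fun u _ => integrable_finset_sum _
            (fun v _ => integrable_finset_sum _ (fun ℓ _ => int1 u v ℓ)))]
          refine Finset.sum_congr rfl fun u _ => ?_
          rw [integral_finset_sum _ (fun v _ => integrable_finset_sum _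
            (fun ℓ _ => int1 u v ℓ))]
          refine Finset.sum_congr rfl fun v _ => ?_
          rw [integral_finset_sum _ (fun ℓ _ => int1 u v ℓ)]
      _ = ∑ u : Fin m → Fin n, ∑ v : Fin (k - 1) → Fin n, ∑ ℓ : Fin n,
            - ∫ q : Coord n, (k : ℝ) * ((A q (glue m (k - 1) (m + k - 1) e4 u v)
              * X q (glue (k - 1) 1 k e5 v (fun _ => ℓ)))
                * pd ℓ (fun q' => Y q' u) q) := by
          refine Finset.sum_congr rfl fun u _ => ?_
          refine Finset.sum_congr rfl fun v _ => ?_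
          refine Finset.sum_congr rfl fun ℓ _ => ?_
          rw [integral_const_mul]
          rw [integral_const_mul]
          rw [ibp ((hAsm _).mul (hXsm _)) (hYsm u) ((hAc _).mul_right) ℓ]
          ring
      _ = - ∑ u : Fin m → Fin n, ∑ v : Fin (k - 1) → Fin n, ∑ ℓ : Fin n,
            ∫ q : Coord n, (k : ℝ) * ((A q (glue m (k - 1) (m + k - 1) e4 u v)
              * X q (glue (k - 1) 1 k e5 v (fun _ => ℓ)))
                * pd ℓ (fun q' => Y q' u) q) := by
          simp only [← Finset.sum_neg_distrib]
      _ = - ∫ q : Coord n, ∑ u : Fin m → Fin n, ∑ v : Fin (k - 1) → Fin n, ∑ ℓ : Fin n,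
            (k : ℝ) * ((A q (glue m (k - 1) (m + k - 1) e4 u v)
              * X q (glue (k - 1) 1 k e5 v (fun _ => ℓ)))
                * pd ℓ (fun q' => Y q' u) q) := by
          congr 1
          rw [integral_finset_sum _ (fun u _ => integrable_finset_sum _
            (fun v _ => integrable_finset_sum _ (fun ℓ _ => int2 u v ℓ)))]
          refine Finset.sum_congr rfl fun u _ => ?_
          rw [integral_finset_sum _ (fun v _ => integrable_finset_sum _
            (fun ℓ _ => int2 u v ℓ))]
          refine Finset.sum_congr rfl fun v _ => ?_
          rw [integral_finset_sum _ (fun ℓ _ => int2 u v ℓ)]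
      _ = - ∫ q : Coord n, ∑ I : Fin (m + k - 1) → Fin n,
          A q I * ((k : ℝ) * ∑ ℓ : Fin n,
            X q (fun j => if _ : (j : ℕ) < k - 1 then
                  (if h2 : (m + (j : ℕ)) < m + k - 1 then I ⟨m + (j : ℕ), h2⟩ else ℓ) else ℓ)
              * pd ℓ (fun q' => Y q' (fun j => if h : (j : ℕ) < m + k - 1 then I ⟨(j : ℕ), h⟩ else ℓ)) q) := by
          congr 1
          exact integral_congr_ae (Filter.Eventually.of_forall fun q => (hR q).symm)


end MainLemmas


/-- **The coadjoint action of `𝔗Q` on `𝔗*Q`.**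
For the pairing `⟨A_d, X^d⟩ = ∫_Q X^{i₁…i_d} A_{i₁…i_d} dq` of contravariant
and covariant symmetric tensor fields, the coadjoint action of `X^k ∈ 𝔗^k Q`
on `A_{m+k−1} ∈ 𝔗*_{m+k−1} Q`, defined by
`⟨ad*_{X^k} A_{m+k−1}, Y^m⟩ = ⟨A_{m+k−1}, [Y^m, X^k]⟩` for all `Y^m`, equals
`A_{m+k−1} ⋆ X^k + X^k ∗ A_{m+k−1} + div X^k ⌟ A_{m+k−1}`. -/
theorem coadjoint_action_on_covariant_tensor_fields
    (n k m : ℕ) (hn : 0 < n)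
    (X : TF n k) (hXsm : SmoothT X) (hXsym : SymmT X)
    (A : TF n (m + k - 1)) (hAsm : SmoothT A) (hAsym : SymmT A)
    (hAc : ∀ I, HasCompactSupport (fun q => A q I)) :
    ∀ Y : TF n m, SmoothT Y → SymmT Y →
      (∫ q : Coord n, ∑ I : Fin m → Fin n,
        (starOp hn m k A X q I + astOp hn m k X A q I
          + contrOp hn m k (divOp k X) A q I) * Y q I)
      = ∫ q : Coord n, ∑ I : Fin (m + k - 1) → Fin n,
          A q I * schouten m k (m + k - 1) Y X q I := by
  intro Y hYsm hYsym
  have intP : Integrable (fun q : Coord n => ∑ I : Fin (m + k - 1) → Fin n, A q I * ((m : ℝ) * ∑ ℓ : Fin n,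
            Y q (fun j => if _ : (j : ℕ) < m - 1 then
                  (if h2 : (k + (j : ℕ)) < m + k - 1 then I ⟨k + (j : ℕ), h2⟩ else ℓ) else ℓ)
              * pd ℓ (fun q' => X q' (fun j => if h : (j : ℕ) < m + k - 1 then I ⟨(j : ℕ), h⟩ else ℓ)) q)) := by
    refine integrable_finset_sum _ fun I _ => Continuous.integrable_of_hasCompactSupport ?_ ((hAc I).mul_right)
    exact ((hAsm I).continuous).mul (continuous_const.mul (continuous_finset_sum _
      fun ℓ _ => ((hYsm _).continuous.mul (contDiff_pd (hXsm _) ℓ).continuous)))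
  have intQ : Integrable (fun q : Coord n => ∑ I : Fin (m + k - 1) → Fin n, A q I * ((k : ℝ) * ∑ ℓ : Fin n,
            X q (fun j => if _ : (j : ℕ) < k - 1 then
                  (if h2 : (m + (j : ℕ)) < m + k - 1 then I ⟨m + (j : ℕ), h2⟩ else ℓ) else ℓ)
              * pd ℓ (fun q' => Y q' (fun j => if h : (j : ℕ) < m + k - 1 then I ⟨(j : ℕ), h⟩ else ℓ)) q)) := by
    refine integrable_finset_sum _ fun I _ => Continuous.integrable_of_hasCompactSupport ?_ ((hAc I).mul_right)
    exact ((hAsm I).continuous).mul (continuous_const.mul (continuous_finset_sum _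
      fun ℓ _ => ((hXsm _).continuous.mul (contDiff_pd (hYsm _) ℓ).continuous)))
  have intS1 : Integrable (fun q : Coord n => ∑ I : Fin m → Fin n, starOp hn m k A X q I * Y q I) := by
    rw [show (fun q : Coord n => ∑ I : Fin m → Fin n, starOp hn m k A X q I * Y q I) = (fun q : Coord n => ∑ I : Fin (m + k - 1) → Fin n, A q I * ((m : ℝ) * ∑ ℓ : Fin n,
            Y q (fun j => if _ : (j : ℕ) < m - 1 then
                  (if h2 : (k + (j : ℕ)) < m + k - 1 then I ⟨k + (j : ℕ), h2⟩ else ℓ) else ℓ)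
              * pd ℓ (fun q' => X q' (fun j => if h : (j : ℕ) < m + k - 1 then I ⟨(j : ℕ), h⟩ else ℓ)) q)) from
      funext fun q => star_eq hn m k A hAsym X Y q]
    exact intP
  have intS2 : Integrable (fun q : Coord n => ∑ I : Fin m → Fin n, (astOp hn m k X A q I + contrOp hn m k (divOp k X) A q I) * Y q I) := by
    rcases Nat.eq_zero_or_pos k with hk | hk
    · subst hk
      have hz : ∀ q : Coord n, (∑ I : Fin m → Fin n,
          (astOp hn m 0 X A q I + contrOp hn m 0 (divOp 0 X) A q I) * Y q I) = 0 :=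
        fun q => by simp [astOp, contrOp, divOp]
      rw [show (fun q : Coord n => ∑ I : Fin m → Fin n,
          (astOp hn m 0 X A q I + contrOp hn m 0 (divOp 0 X) A q I) * Y q I)
        = fun _ => (0 : ℝ) from funext hz]
      exact integrable_zero _ _ _
    · have e4 : m + (k - 1) = m + k - 1 := by omega
      have e5 : (k - 1) + 1 = k := by omega
      rw [show (fun q : Coord n => ∑ I : Fin m → Fin n, (astOp hn m k X A q I + contrOp hn m k (divOp k X) A q I) * Y q I)
          = (fun q : Coord n => ∑ u : Fin m → Fin n, ∑ v : Fin (k - 1) → Fin n, ∑ ℓ : Fin n,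
              (k : ℝ) * (pd ℓ (fun q' => A q' (glue m (k - 1) (m + k - 1) e4 u v)
                  * X q' (glue (k - 1) 1 k e5 v (fun _ => ℓ))) q * Y q u)) from
        funext fun q => astcontr_pt hn m k hk e4 e5 X hXsm hXsym A hAsm hAsym Y q]
      refine integrable_finset_sum _ fun u _ => integrable_finset_sum _ fun v _ =>
        integrable_finset_sum _ fun ℓ _ => Continuous.integrable_of_hasCompactSupport ?_ ?_
      · exact continuous_const.mul (((contDiff_pd ((hAsm _).mul (hXsm _)) ℓ).continuous).mul
          (hYsm u).continuous)
      · exact (((hcs_pd ((hAc _).mul_right) ℓ)).mul_right).mul_left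
  calc ∫ q : Coord n, ∑ I : Fin m → Fin n,
        (starOp hn m k A X q I + astOp hn m k X A q I
          + contrOp hn m k (divOp k X) A q I) * Y q I
      = ∫ q : Coord n, ((∑ I : Fin m → Fin n, starOp hn m k A X q I * Y q I) + (∑ I : Fin m → Fin n, (astOp hn m k X A q I + contrOp hn m k (divOp k X) A q I) * Y q I)) := by
        refine integral_congr_ae (Filter.Eventually.of_forall fun q => ?_)
        beta_reduce
        rw [← Finset.sum_add_distrib]
        exact Finset.sum_congr rfl fun I _ => by ring
    _ = (∫ q : Coord n, ∑ I : Fin m → Fin n, starOp hn m k A X q I * Y q I) + (∫ q : Coord n, ∑ I : Fin m → Fin n, (astOp hn m k X A q I + contrOp hn m k (divOp k X) A q I) * Y q I) := integral_add intS1 intS2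
    _ = (∫ q : Coord n, ∑ I : Fin (m + k - 1) → Fin n, A q I * ((m : ℝ) * ∑ ℓ : Fin n,
            Y q (fun j => if _ : (j : ℕ) < m - 1 then
                  (if h2 : (k + (j : ℕ)) < m + k - 1 then I ⟨k + (j : ℕ), h2⟩ else ℓ) else ℓ)
              * pd ℓ (fun q' => X q' (fun j => if h : (j : ℕ) < m + k - 1 then I ⟨(j : ℕ), h⟩ else ℓ)) q)) + (∫ q : Coord n, ∑ I : Fin m → Fin n, (astOp hn m k X A q I + contrOp hn m k (divOp k X) A q I) * Y q I) := by
        rw [show (∫ q : Coord n, ∑ I : Fin m → Fin n, starOp hn m k A X q I * Y q I) = ∫ q : Coord n, ∑ I : Fin (m + k - 1) → Fin n, A q I * ((m : ℝ) * ∑ ℓ : Fin n,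
            Y q (fun j => if _ : (j : ℕ) < m - 1 then
                  (if h2 : (k + (j : ℕ)) < m + k - 1 then I ⟨k + (j : ℕ), h2⟩ else ℓ) else ℓ)
              * pd ℓ (fun q' => X q' (fun j => if h : (j : ℕ) < m + k - 1 then I ⟨(j : ℕ), h⟩ else ℓ)) q) from
          integral_congr_ae (Filter.Eventually.of_forall fun q => star_eq hn m k A hAsym X Y q)]
    _ = (∫ q : Coord n, ∑ I : Fin (m + k - 1) → Fin n, A q I * ((m : ℝ) * ∑ ℓ : Fin n,
            Y q (fun j => if _ : (j : ℕ) < m - 1 then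
                  (if h2 : (k + (j : ℕ)) < m + k - 1 then I ⟨k + (j : ℕ), h2⟩ else ℓ) else ℓ)
              * pd ℓ (fun q' => X q' (fun j => if h : (j : ℕ) < m + k - 1 then I ⟨(j : ℕ), h⟩ else ℓ)) q)) + - (∫ q : Coord n, ∑ I : Fin (m + k - 1) → Fin n, A q I * ((k : ℝ) * ∑ ℓ : Fin n,
            X q (fun j => if _ : (j : ℕ) < k - 1 then
                  (if h2 : (m + (j : ℕ)) < m + k - 1 then I ⟨m + (j : ℕ), h2⟩ else ℓ) else ℓ)
              * pd ℓ (fun q' => Y q' (fun j => if h : (j : ℕ) < m + k - 1 then I ⟨(j : ℕ), h⟩ else ℓ)) q)) := by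
        rw [astcontr_eq hn m k X hXsm hXsym A hAsm hAsym hAc Y hYsm]
    _ = (∫ q : Coord n, ∑ I : Fin (m + k - 1) → Fin n, A q I * ((m : ℝ) * ∑ ℓ : Fin n,
            Y q (fun j => if _ : (j : ℕ) < m - 1 then
                  (if h2 : (k + (j : ℕ)) < m + k - 1 then I ⟨k + (j : ℕ), h2⟩ else ℓ) else ℓ)
              * pd ℓ (fun q' => X q' (fun j => if h : (j : ℕ) < m + k - 1 then I ⟨(j : ℕ), h⟩ else ℓ)) q)) - (∫ q : Coord n, ∑ I : Fin (m + k - 1) → Fin n, A q I * ((k : ℝ) * ∑ ℓ : Fin n,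
            X q (fun j => if _ : (j : ℕ) < k - 1 then
                  (if h2 : (m + (j : ℕ)) < m + k - 1 then I ⟨m + (j : ℕ), h2⟩ else ℓ) else ℓ)
              * pd ℓ (fun q' => Y q' (fun j => if h : (j : ℕ) < m + k - 1 then I ⟨(j : ℕ), h⟩ else ℓ)) q)) := by
        rw [← sub_eq_add_neg]
    _ = ∫ q : Coord n, ((∑ I : Fin (m + k - 1) → Fin n, A q I * ((m : ℝ) * ∑ ℓ : Fin n,
            Y q (fun j => if _ : (j : ℕ) < m - 1 then
                  (if h2 : (k + (j : ℕ)) < m + k - 1 then I ⟨k + (j : ℕ), h2⟩ else ℓ) else ℓ)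
              * pd ℓ (fun q' => X q' (fun j => if h : (j : ℕ) < m + k - 1 then I ⟨(j : ℕ), h⟩ else ℓ)) q)) - (∑ I : Fin (m + k - 1) → Fin n, A q I * ((k : ℝ) * ∑ ℓ : Fin n,
            X q (fun j => if _ : (j : ℕ) < k - 1 then
                  (if h2 : (m + (j : ℕ)) < m + k - 1 then I ⟨m + (j : ℕ), h2⟩ else ℓ) else ℓ)
              * pd ℓ (fun q' => Y q' (fun j => if h : (j : ℕ) < m + k - 1 then I ⟨(j : ℕ), h⟩ else ℓ)) q))) := (integral_sub intP intQ).symm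
    _ = ∫ q : Coord n, ∑ I : Fin (m + k - 1) → Fin n,
          A q I * schouten m k (m + k - 1) Y X q I := by
        refine integral_congr_ae (Filter.Eventually.of_forall fun q => ?_)
        beta_reduce
        rw [← Finset.sum_sub_distrib]
        refine Finset.sum_congr rfl fun I _ => ?_
        simp only [schouten]
        ring

end
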